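/- For any MinBudget instance (N, ⊴, c), the subschedule of a feasible schedule S restricted to an ideal J of ⊴ is a feasible schedule of (J, ⊴_J, c); moreover, if additionally every ideal of ⊴ contained in N \ J has non-negative cost, then the budget of this subschedule is at most b(S). -/

import Mathlib

open List

variable {ι : Type*} [DecidableEq ι]

/-- Total cost of a schedule (list of jobs). -/
def listCost (c : ι → ℝ) (S : List ι) : ℝ := (S.map c).sum

/-- Budget of a schedule: maximum cost of a prefix (the empty prefix has cost 0). -/
def listBudget (c : ι → ℝ) : List ι → ℝ
  | [] => 0
  | j :: t => max 0 (c j + listBudget c t)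

/-- Return of a schedule. -/
def listReturn (c : ι → ℝ) (S : List ι) : ℝ := listCost c S - listBudget c S

/-- `S` enumerates the finite job set `N` without repetition. -/
def IsScheduleOf (N : Finset ι) (S : List ι) : Prop :=
  S.Nodup ∧ ∀ j, j ∈ S ↔ j ∈ N

/-- `S` is a linear extension of the precedence relation `r` (restricted to its jobs). -/
def RespectsOrder (r : ι → ι → Prop) (S : List ι) : Prop :=
  ∀ i j, r i j → i ∈ S → j ∈ S → S.idxOf i ≤ S.idxOf j

/-- Minimum budget over all feasible schedules of the job set `X`. -/
noncomputable def setBudget (r : ι → ι → Prop) (c : ι → ℝ) (X : Finset ι) : ℝ :=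
  sInf {b | ∃ S : List ι, IsScheduleOf X S ∧ RespectsOrder r S ∧ listBudget c S = b}

/-- Total cost of a job set. -/
def setCost (c : ι → ℝ) (X : Finset ι) : ℝ := ∑ j ∈ X, c j

/-- Return of a job set. -/
noncomputable def setReturn (r : ι → ι → Prop) (c : ι → ℝ) (X : Finset ι) : ℝ :=
  setCost c X - setBudget r c X

/-- The cbr-preorder on job sets. -/
def cbrLE (r : ι → ι → Prop) (c : ι → ℝ) (X Y : Finset ι) : Prop :=
  (setCost c X < 0 ∧ 0 ≤ setCost c Y) ∨
  (setCost c X < 0 ∧ setCost c Y < 0 ∧ setBudget r c X < setBudget r c Y) ∨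
  (setCost c X < 0 ∧ setCost c Y < 0 ∧ setBudget r c X = setBudget r c Y ∧
    setReturn r c X ≤ setReturn r c Y) ∨
  (0 ≤ setCost c X ∧ 0 ≤ setCost c Y ∧ setReturn r c X ≤ setReturn r c Y)

/-- `J` is an ideal (downward-closed subset) of `r` restricted to `I`. -/
def IsIdealIn (r : ι → ι → Prop) (I J : Finset ι) : Prop :=
  J ⊆ I ∧ ∀ j ∈ J, ∀ i ∈ I, r i j → i ∈ J

/-- `F` is a filter (upward-closed subset) of `r` restricted to `I`. -/
def IsFilterIn (r : ι → ι → Prop) (I F : Finset ι) : Prop :=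
  F ⊆ I ∧ ∀ i ∈ F, ∀ j ∈ I, r i j → j ∈ F

/-- `I` is an interval of `r` on `N`: intersection of an ideal and a filter. -/
def IsIntervalIn (r : ι → ι → Prop) (N I : Finset ι) : Prop :=
  ∃ J F, IsIdealIn r N J ∧ IsFilterIn r N F ∧ I = J ∩ F

/-- An irreducible interval: every ideal of the restricted order is `⪰` the interval. -/
def IsIrreducibleIn (r : ι → ι → Prop) (c : ι → ℝ) (N I : Finset ι) : Prop :=
  IsIntervalIn r N I ∧ ∀ J, IsIdealIn r I J → cbrLE r c I J

/-- A schedule (given as blocks `SS`) in increasing irreducible structure. -/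
def IncIrrStructure (r : ι → ι → Prop) (c : ι → ℝ) (N : Finset ι)
    (SS : List (List ι)) : Prop :=
  IsScheduleOf N SS.flatten ∧ RespectsOrder r SS.flatten ∧
  (∀ S ∈ SS, IsIrreducibleIn r c N S.toFinset ∧ RespectsOrder r S ∧
    listBudget c S = setBudget r c S.toFinset) ∧
  ∀ i j : Fin SS.length, i < j → cbrLE r c (SS.get i).toFinset (SS.get j).toFinset

/-!
Keeping only the jobs of `J` preserves the relative order, so the subschedule is again a linear
extension. For the budget, every prefix of the subschedule is `P ∩ J` for a prefix `P` of `S`.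
Such a `P` is an ideal of `⊴`, hence `P \ J` is an ideal of `⊴` on `N \ J`, so
`cost (P ∩ J) = cost P - cost (P \ J) ≤ cost P ≤ b(S)`.
-/

section Budget

variable {α : Type*} (c : α → ℝ)

lemma listBudget_nonneg (L : List α) : 0 ≤ listBudget c L := by
  cases L <;> simp [listBudget]

lemma listCost_le_listBudget_of_isPrefix {P L : List α} (h : P <+: L) :
    listCost c P ≤ listBudget c L := by
  induction L generalizing P with
  | nil => simp [List.prefix_nil.mp h, listCost, listBudget]
  | cons a t ih =>
    rcases P with _ | ⟨b, P⟩
    · simpa [listCost] using listBudget_nonneg c (a :: t)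
    · obtain ⟨rfl, hP⟩ := List.cons_prefix_cons.mp h
      have := ih hP
      simp only [listCost, List.map_cons, List.sum_cons, listBudget] at this ⊢
      exact le_max_of_le_right (by linarith)

lemma listBudget_le_of_forall_isPrefix {L : List α} {b : ℝ}
    (h : ∀ P, P <+: L → listCost c P ≤ b) : listBudget c L ≤ b := by
  induction L generalizing b with
  | nil => simpa [listCost, listBudget] using h [] List.nil_prefix
  | cons a t ih =>
    have hnil : (0 : ℝ) ≤ b := by simpa [listCost] using h [] List.nil_prefix
    have htail : listBudget c t ≤ b - c a := ih fun P hP => by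
      have := h (a :: P) (List.cons_prefix_cons.mpr ⟨rfl, hP⟩)
      simp only [listCost, List.map_cons, List.sum_cons] at this ⊢
      linarith
    exact max_le hnil (by linarith)

lemma listBudget_filter_le {L : List α} (p : α → Bool)
    (h : ∀ P, P <+: L → listCost c (P.filter p) ≤ listCost c P) :
    listBudget c (L.filter p) ≤ listBudget c L :=
  listBudget_le_of_forall_isPrefix c fun Q hQ => by
    obtain ⟨P, hP, rfl⟩ := List.prefix_filter_iff.mp hQ
    exact (h P hP).trans (listCost_le_listBudget_of_isPrefix c hP)

lemma listCost_eq_setCost_toFinset [DecidableEq α] {L : List α} (h : L.Nodup) :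
    listCost c L = setCost c L.toFinset :=
  (List.sum_toFinset c h).symm

lemma listCost_filter_mem_add_setCost_sdiff [DecidableEq α] {P : List α} (hP : P.Nodup)
    (J : Finset α) :
    listCost c (P.filter (· ∈ J)) + setCost c (P.toFinset \ J) = listCost c P := by
  rw [listCost_eq_setCost_toFinset c (hP.filter _), listCost_eq_setCost_toFinset c hP,
    List.toFinset_filter]
  simp only [decide_eq_true_eq, Finset.filter_mem_eq_inter, setCost]
  exact Finset.sum_inter_add_sum_sdiff _ _ _

end Budget

section Order

variable {r : ι → ι → Prop}

lemma respectsOrder_iff_pairwise {S : List ι} (hS : S.Nodup) :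
    RespectsOrder r S ↔ S.Pairwise (fun a b => ¬ r b a) := by
  rw [List.pairwise_iff_getElem]
  constructor
  · intro h i j hi hj hij hji
    have := h _ _ hji (List.getElem_mem hj) (List.getElem_mem hi)
    rw [hS.idxOf_getElem, hS.idxOf_getElem] at this
    omega
  · intro h a b hab ha hb
    by_contra! hlt
    have ha' := List.idxOf_lt_length_iff.mpr ha
    have hb' := List.idxOf_lt_length_iff.mpr hb
    have := h _ _ hb' ha' hlt
    rw [List.getElem_idxOf ha', List.getElem_idxOf hb'] at this
    exact this hab

lemma RespectsOrder.filter {S : List ι} (h : RespectsOrder r S) (hS : S.Nodup)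
    (p : ι → Bool) : RespectsOrder r (S.filter p) :=
  (respectsOrder_iff_pairwise (hS.filter p)).mpr
    (((respectsOrder_iff_pairwise hS).mp h).filter p)

lemma IsScheduleOf.filter_mem {N J : Finset ι} {S : List ι} (hS : IsScheduleOf N S)
    (hJ : J ⊆ N) : IsScheduleOf J (S.filter (· ∈ J)) :=
  ⟨hS.1.filter _, fun j => by
    simp only [List.mem_filter, hS.2, decide_eq_true_eq]
    exact ⟨And.right, fun h => ⟨hJ h, h⟩⟩⟩

lemma isIdealIn_toFinset_of_isPrefix {N : Finset ι} {S P : List ι} (hS : IsScheduleOf N S)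
    (hSr : RespectsOrder r S) (hP : P <+: S) : IsIdealIn r N P.toFinset := by
  refine ⟨fun j hj => (hS.2 j).mp (hP.subset (List.mem_toFinset.mp hj)), ?_⟩
  intro j hj i hi hij
  have hiS := (hS.2 i).mpr hi
  rw [List.mem_toFinset, hP.mem_iff_idxOf_lt_length] at hj ⊢
  exact (hSr i j hij hiS (hP.subset ((hP.mem_iff_idxOf_lt_length j).mpr hj))).trans_lt hj

lemma IsIdealIn.sdiff {N I : Finset ι} (h : IsIdealIn r N I) (J : Finset ι) :
    IsIdealIn r (N \ J) (I \ J) := by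
  refine ⟨Finset.sdiff_subset_sdiff h.1 subset_rfl, fun j hj i hi hij => ?_⟩
  rw [Finset.mem_sdiff] at hj hi ⊢
  exact ⟨h.2 j hj.1 i hi.1 hij, hi.2⟩

end Order

theorem ideal_subschedule_general (r : ι → ι → Prop)
    (c : ι → ℝ) (N J : Finset ι) (hJ : IsIdealIn r N J)
    (S : List ι) (hS : IsScheduleOf N S) (hSf : RespectsOrder r S) :
    IsScheduleOf J (S.filter (fun j => decide (j ∈ J))) ∧
    RespectsOrder r (S.filter (fun j => decide (j ∈ J))) ∧
    ((∀ K, IsIdealIn r (N \ J) K → 0 ≤ setCost c K) →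
      listBudget c (S.filter (fun j => decide (j ∈ J))) ≤ listBudget c S) := by
  refine ⟨hS.filter_mem hJ.1, hSf.filter hS.1 _, fun hK => ?_⟩
  refine listBudget_filter_le c _ fun P hP => ?_
  have hrest := hK _ ((isIdealIn_toFinset_of_isPrefix hS hSf hP).sdiff J)
  have hsplit := listCost_filter_mem_add_setCost_sdiff c (hS.1.sublist hP.sublist) J
  linarith

theorem ideal_subschedule (r : ι → ι → Prop) (hr : IsPartialOrder ι r)
    (c : ι → ℝ) (N J : Finset ι) (hJ : IsIdealIn r N J)
    (S : List ι) (hS : IsScheduleOf N S) (hSf : RespectsOrder r S) :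
    IsScheduleOf J (S.filter (fun j => decide (j ∈ J))) ∧
    RespectsOrder r (S.filter (fun j => decide (j ∈ J))) ∧
    ((∀ K, IsIdealIn r (N \ J) K → 0 ≤ setCost c K) →
      listBudget c (S.filter (fun j => decide (j ∈ J))) ≤ listBudget c S) :=
  ideal_subschedule_general r c N J hJ S hS hSf
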